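/- Let A be a unital C*-algebra and u, v ∈ A isometries with u·v = λ·v·u, |λ| = 1. With ū := u(1 − vv*) + (1 − uu*)v* and p̄ := v(1 − uu*)v*, the identity p̄·ū·p̄·ū* = v·v*·(1 − u·u*) holds. Consequently, the commutator [p̄, ū·p̄·ū*] equals the commutator [u·u*, v·v*] up to sign, and in particular [p̄, ū p̄ ū*] = 0 if and only if [uu*, vv*] = 0. -/

import Mathlib

/-!
The relation `uv = λ vu` with `|λ| = 1` gives `(uv)(uv)* = (vu)(vu)*`, i.e.
`v (uu*) v* = u (vv*) u*`, so `p̄ = vv* - u (vv*) u*`. The second summand lives under `uu*`,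
hence `p̄` and `vv*` agree when multiplied by `1 - uu*` on either side. On the other hand,
using only that `u, v` are isometries, `ū p̄ ū* = 1 - uu*`: the partial isometry `ū` carries the
corner `p̄` back onto `1 - uu*`. Then `p̄ ū p̄ ū* = p̄ (1 - uu*) = vv* (1 - uu*)` and
`[p̄, ū p̄ ū*] = [vv*, 1 - uu*] = [uu*, vv*]`.
-/

section Isometry

variable {A : Type*} [Ring A] [StarRing A] {u v : A}

lemma star_mul_mul_cancel_left (hu : star u * u = 1) (x : A) : star u * (u * x) = x := by
  rw [← mul_assoc, hu, one_mul]

lemma mul_star_mul_self (hu : star u * u = 1) : u * star u * u = u := by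
  rw [mul_assoc, hu, mul_one]

lemma one_sub_mul_star_mul_self (hu : star u * u = 1) : (1 - u * star u) * u = 0 := by
  rw [sub_mul, one_mul, mul_star_mul_self hu, sub_self]

lemma star_mul_one_sub_mul_star (hu : star u * u = 1) : star u * (1 - u * star u) = 0 := by
  rw [mul_sub, mul_one, ← mul_assoc, hu, one_mul, sub_self]

lemma isIdempotentElem_one_sub_mul_star (hu : star u * u = 1) :
    IsIdempotentElem (1 - u * star u) :=
  IsIdempotentElem.one_sub <| by
    rw [IsIdempotentElem, mul_assoc, star_mul_mul_cancel_left hu]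

lemma mul_mul_star_mul_one_sub_mul_star (hu : star u * u = 1) (x : A) :
    u * x * star u * (1 - u * star u) = 0 := by
  rw [mul_assoc, star_mul_one_sub_mul_star hu, mul_zero]

lemma one_sub_mul_star_mul_mul_mul_star (hu : star u * u = 1) (x : A) :
    (1 - u * star u) * (u * x * star u) = 0 := by
  rw [mul_assoc u, ← mul_assoc, one_sub_mul_star_mul_self hu, zero_mul]

lemma corner_conj_eq_one_sub_mul_star (hu : star u * u = 1) (hv : star v * v = 1) :
    (u * (1 - v * star v) + (1 - u * star u) * star v) * (v * (1 - u * star u) * star v) *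
      star (u * (1 - v * star v) + (1 - u * star u) * star v) = 1 - u * star u := by
  have hq := (isIdempotentElem_one_sub_mul_star hu).eq
  have hright : (u * (1 - v * star v) + (1 - u * star u) * star v) *
      (v * (1 - u * star u) * star v) = (1 - u * star u) * star v := by
    rw [add_mul, mul_assoc u, mul_assoc v, ← mul_assoc (1 - v * star v),
      one_sub_mul_star_mul_self hv, zero_mul, mul_zero, zero_add, mul_assoc _ (star v),
      star_mul_mul_cancel_left hv, ← mul_assoc, hq]
  have hstar : star (u * (1 - v * star v) + (1 - u * star u) * star v) =
      (1 - v * star v) * star u + v * (1 - u * star u) := by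
    simp only [star_add, star_mul, star_sub, star_one, star_star]
  rw [hright, hstar, mul_add, mul_assoc _ (star v), ← mul_assoc (star v),
    star_mul_one_sub_mul_star hv, zero_mul, mul_zero, zero_add, mul_assoc,
    star_mul_mul_cancel_left hv, hq]

end Isometry

section Twisted

variable {𝕜 A : Type*} [RCLike 𝕜] [Ring A] [StarRing A] [Algebra 𝕜 A] [StarModule 𝕜 A]

lemma smul_mul_star_smul_of_norm_eq_one {l : 𝕜} (hl : ‖l‖ = 1) (x : A) :
    l • x * star (l • x) = x * star x := by
  rw [star_smul, smul_mul_smul_comm, RCLike.star_def, RCLike.mul_conj, hl]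
  simp

lemma conj_mul_star_eq_of_mul_eq_smul {u v : A} {l : 𝕜} (hl : ‖l‖ = 1)
    (huv : u * v = l • (v * u)) :
    v * (u * star u) * star v = u * (v * star v) * star u := by
  have h := congrArg (fun x => x * star x) huv
  simp only [smul_mul_star_smul_of_norm_eq_one hl, star_mul, mul_assoc] at h
  simp only [mul_assoc, h]

end Twisted

theorem stmt_10_general {A : Type*} [NormedRing A] [StarRing A]
    [NormedAlgebra ℂ A] [StarModule ℂ A]
    (u v : A) (hu : star u * u = 1) (hv : star v * v = 1)
    (l : ℂ) (hl : ‖l‖ = 1) (huv : u * v = l • (v * u))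
    (ub pb : A)
    (hub : ub = u * (1 - v * star v) + (1 - u * star u) * star v)
    (hpb : pb = v * (1 - u * star u) * star v) :
    pb * ub * pb * star ub = v * star v * (1 - u * star u) ∧
    (pb * (ub * pb * star ub) - (ub * pb * star ub) * pb
        = (u * star u) * (v * star v) - (v * star v) * (u * star u) ∨
      pb * (ub * pb * star ub) - (ub * pb * star ub) * pb
        = (v * star v) * (u * star u) - (u * star u) * (v * star v)) ∧
    (pb * (ub * pb * star ub) = (ub * pb * star ub) * pb ↔
      (u * star u) * (v * star v) = (v * star v) * (u * star u)) := by
  have hcorner : ub * pb * star ub = 1 - u * star u := by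
    rw [hub, hpb]; exact corner_conj_eq_one_sub_mul_star hu hv
  have hpb' : pb = v * star v - u * (v * star v) * star u := by
    rw [hpb, mul_sub, mul_one, sub_mul, conj_mul_star_eq_of_mul_eq_smul hl huv]
  have hright : pb * (1 - u * star u) = v * star v * (1 - u * star u) := by
    rw [hpb', sub_mul, mul_mul_star_mul_one_sub_mul_star hu, sub_zero]
  have hleft : (1 - u * star u) * pb = (1 - u * star u) * (v * star v) := by
    rw [hpb', mul_sub, one_sub_mul_star_mul_mul_mul_star hu, sub_zero]
  have hcomm : pb * (ub * pb * star ub) - (ub * pb * star ub) * pb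
      = (u * star u) * (v * star v) - (v * star v) * (u * star u) := by
    rw [hcorner, hright, hleft]; noncomm_ring
  refine ⟨?_, Or.inl hcomm, ?_⟩
  · rw [mul_assoc pb, mul_assoc pb, hcorner, hright]
  · rw [← sub_eq_zero, hcomm, sub_eq_zero]

/-- For isometries `u, v` with `uv = λ•vu`, with `ū := u(1-vv*) + (1-uu*)v*` and
`p̄ := v(1-uu*)v*`, one has `p̄ ū p̄ ū* = vv*(1-uu*)`; consequently the commutator
`[p̄, ū p̄ ū*]` equals `[uu*, vv*]` up to sign, and in particular `[p̄, ū p̄ ū*] = 0` iff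
`[uu*, vv*] = 0`. -/
theorem stmt_10 {A : Type*} [NormedRing A] [StarRing A] [CStarRing A]
    [NormedAlgebra ℂ A] [StarModule ℂ A] [CompleteSpace A]
    (u v : A) (hu : star u * u = 1) (hv : star v * v = 1)
    (l : ℂ) (hl : ‖l‖ = 1) (huv : u * v = l • (v * u))
    (ub pb : A)
    (hub : ub = u * (1 - v * star v) + (1 - u * star u) * star v)
    (hpb : pb = v * (1 - u * star u) * star v) :
    pb * ub * pb * star ub = v * star v * (1 - u * star u) ∧
    (pb * (ub * pb * star ub) - (ub * pb * star ub) * pb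
        = (u * star u) * (v * star v) - (v * star v) * (u * star u) ∨
      pb * (ub * pb * star ub) - (ub * pb * star ub) * pb
        = (v * star v) * (u * star u) - (u * star u) * (v * star v)) ∧
    (pb * (ub * pb * star ub) = (ub * pb * star ub) * pb ↔
      (u * star u) * (v * star v) = (v * star v) * (u * star u)) :=
  stmt_10_general u v hu hv l hl huv ub pb hub hpb
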